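/- Guarantee of conservative policy iteration with a trace model (CPI-trace). In a discounted MDP with initial distribution P0, let πf, πb, πcomp be stationary policies, let Π be a nonempty set of stationary policies, let μ be a probability vector on S, and let ε, η, C ≥ 0. Write ν = d^{πf}_{P0} and ρ = d^{πb}_ν (the discounted occupancy of πb started from ν). Assume: (i) local optimality: for every π' ∈ Π, ∑_s ρ(s) ∑_a π'(a|s) A^{πb}(s,a) ≤ 2ε; (ii) realizability: there exists π' ∈ Π with ∑_s ρ(s) · max_a A^{πb}(s,a) = ∑_s ρ(s) ∑_a π'(a|s) A^{πb}(s,a); (iii) distribution matching: ∑_s (μ(s) − ν(s)) · max_a A^{πb}(s,a) ≤ η; (iv) coverage: d^{πcomp}_{P0}(s) ≤ C · μ(s) for every s. Then V^{πcomp}(P0) − V^{πb}(P0) ≤ 2εC/(1−γ)² + Cη/(1−γ). -/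
import Mathlib


open Finset

/-- Iterates of the state distribution of a stationary policy `π` in a discounted MDP:
`ν^π_0 = ν` and `ν^π_{h+1}(s') = ∑_{s,a} ν^π_h(s) π(a|s) P(s'|s,a)`. -/
noncomputable def nuPol {S A : Type*} [Fintype S] [Fintype A]
    (P : S → A → S → ℝ) (π : S → A → ℝ) (ν : S → ℝ) : ℕ → S → ℝ
  | 0 => ν
  | h + 1 => fun s' => ∑ s : S, ∑ a : A, nuPol P π ν h s * π s a * P s a s'

/-- Discounted occupancy `d^π_ν(s) = (1 − γ) ∑_{h=0}^∞ γ^h ν^π_h(s)`. -/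
noncomputable def dDisc {S A : Type*} [Fintype S] [Fintype A] (γ : ℝ)
    (P : S → A → S → ℝ) (π : S → A → ℝ) (ν : S → ℝ) (s : S) : ℝ :=
  (1 - γ) * ∑' h : ℕ, γ ^ h * nuPol P π ν h s

/-- Value of a stationary policy from initial distribution `ν`:
`V^π(ν) = ∑_{h=0}^∞ γ^h ∑_{s,a} ν^π_h(s) π(a|s) R(s,a)`. -/
noncomputable def Vdisc {S A : Type*} [Fintype S] [Fintype A] (γ : ℝ)
    (P : S → A → S → ℝ) (R : S → A → ℝ) (π : S → A → ℝ) (ν : S → ℝ) : ℝ :=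
  ∑' h : ℕ, γ ^ h * ∑ s : S, ∑ a : A, nuPol P π ν h s * π s a * R s a

/-- Action value `Q^π(s,a) = R(s,a) + γ ∑_{s'} P(s'|s,a) V^π(δ_{s'})`. -/
noncomputable def Qdisc {S A : Type*} [Fintype S] [Fintype A] [DecidableEq S] (γ : ℝ)
    (P : S → A → S → ℝ) (R : S → A → ℝ) (π : S → A → ℝ) (s : S) (a : A) : ℝ :=
  R s a + γ * ∑ s' : S, P s a s' * Vdisc γ P R π (fun t => if t = s' then 1 else 0)

/-- Advantage `A^π(s,a) = Q^π(s,a) − ∑_{a'} π(a'|s) Q^π(s,a')`. -/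
noncomputable def Adisc {S A : Type*} [Fintype S] [Fintype A] [DecidableEq S] (γ : ℝ)
    (P : S → A → S → ℝ) (R : S → A → ℝ) (π : S → A → ℝ) (s : S) (a : A) : ℝ :=
  Qdisc γ P R π s a - ∑ a' : A, π s a' * Qdisc γ P R π s a'

/-- Maximum of a real-valued function over the finite nonempty type `A`. -/
noncomputable def maxA {A : Type*} [Fintype A] [Nonempty A] (g : A → ℝ) : ℝ :=
  Finset.univ.sup' Finset.univ_nonempty g

section Basics
variable {S A : Type*} [Fintype S] [Fintype A]
variable {P : S → A → S → ℝ} {π : S → A → ℝ} {ν : S → ℝ}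

lemma nuPol_nonneg (hP : ∀ s a s', 0 ≤ P s a s') (hπ : ∀ s a, 0 ≤ π s a)
    (hν : ∀ s, 0 ≤ ν s) : ∀ h s, 0 ≤ nuPol P π ν h s := by
  intro h
  induction h with
  | zero => exact hν
  | succ h ih =>
    intro s'
    exact Finset.sum_nonneg fun s _ => Finset.sum_nonneg fun a _ =>
      mul_nonneg (mul_nonneg (ih s) (hπ s a)) (hP s a s')

lemma nuPol_sum_one (hP1 : ∀ s a, ∑ s' : S, P s a s' = 1) (hπ1 : ∀ s, ∑ a : A, π s a = 1)
    (hν1 : ∑ s : S, ν s = 1) : ∀ h, ∑ s : S, nuPol P π ν h s = 1 := by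
  intro h
  induction h with
  | zero => exact hν1
  | succ h ih =>
    show ∑ s' : S, ∑ s : S, ∑ a : A, nuPol P π ν h s * π s a * P s a s' = 1
    rw [Finset.sum_comm]
    calc ∑ s : S, ∑ s' : S, ∑ a : A, nuPol P π ν h s * π s a * P s a s'
        = ∑ s : S, nuPol P π ν h s := by
          refine Finset.sum_congr rfl fun s _ => ?_
          rw [Finset.sum_comm]
          simp only [← Finset.mul_sum, hP1, mul_one, hπ1]
      _ = 1 := ih

lemma nuPol_le_one (hP : ∀ s a s', 0 ≤ P s a s') (hP1 : ∀ s a, ∑ s' : S, P s a s' = 1)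
    (hπ : ∀ s a, 0 ≤ π s a) (hπ1 : ∀ s, ∑ a : A, π s a = 1)
    (hν : ∀ s, 0 ≤ ν s) (hν1 : ∑ s : S, ν s = 1) (h : ℕ) (s : S) :
    nuPol P π ν h s ≤ 1 := by
  have := nuPol_sum_one hP1 hπ1 hν1 (P := P) (π := π) h
  calc nuPol P π ν h s ≤ ∑ t : S, nuPol P π ν h t :=
        Finset.single_le_sum (fun t _ => nuPol_nonneg hP hπ hν h t) (Finset.mem_univ s)
    _ = 1 := this

lemma summable_geo_bound {γ : ℝ} (hγ0 : 0 ≤ γ) (hγ1 : γ < 1) {u : ℕ → ℝ} {M : ℝ}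
    (hu : ∀ h, |u h| ≤ M) : Summable (fun h => γ ^ h * u h) := by
  apply Summable.of_abs
  apply Summable.of_nonneg_of_le (fun h => abs_nonneg _) (fun h => ?_)
    ((summable_geometric_of_lt_one hγ0 hγ1).mul_right M)
  rw [abs_mul, abs_pow, abs_of_nonneg hγ0]
  exact mul_le_mul_of_nonneg_left (hu h) (pow_nonneg hγ0 h)

lemma nuPol_shift : ∀ h s', nuPol P π ν (h + 1) s' =
    nuPol P π (fun t => ∑ s : S, ∑ a : A, ν s * π s a * P s a t) h s' := by
  intro h
  induction h with
  | zero => intro s'; rfl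
  | succ h ih =>
    intro s'
    show (∑ s : S, ∑ a : A, nuPol P π ν (h+1) s * π s a * P s a s') = _
    simp only [ih]
    rfl

lemma nuPol_linear [DecidableEq S] : ∀ h s, nuPol P π ν h s =
    ∑ s0 : S, ν s0 * nuPol P π (fun t => if t = s0 then 1 else 0) h s := by
  intro h
  induction h with
  | zero =>
    intro s
    show ν s = ∑ s0 : S, ν s0 * (if s = s0 then 1 else 0)
    simp only [mul_ite, mul_one, mul_zero, Finset.sum_ite_eq, Finset.mem_univ, if_true]
  | succ h ih =>
    intro s'
    show (∑ s : S, ∑ a : A, nuPol P π ν h s * π s a * P s a s')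
      = ∑ s0 : S, ν s0 * ∑ s : S, ∑ a : A,
          nuPol P π (fun t => if t = s0 then 1 else 0) h s * π s a * P s a s'
    simp only [Finset.mul_sum]
    conv_rhs => rw [Finset.sum_comm]
    refine Finset.sum_congr rfl fun s _ => ?_
    conv_rhs => rw [Finset.sum_comm]
    refine Finset.sum_congr rfl fun a _ => ?_
    rw [ih s, Finset.sum_mul, Finset.sum_mul]
    exact Finset.sum_congr rfl fun s0 _ => by ring

end Basics

section Vfacts
variable {S A : Type*} [Fintype S] [Fintype A]
variable {γ : ℝ} {P : S → A → S → ℝ} {R : S → A → ℝ} {π : S → A → ℝ} {ν : S → ℝ}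

/-- the reward-per-step summand of `Vdisc` -/
lemma csum_mem (hP : ∀ s a s', 0 ≤ P s a s') (hP1 : ∀ s a, ∑ s' : S, P s a s' = 1)
    (hπ : ∀ s a, 0 ≤ π s a) (hπ1 : ∀ s, ∑ a : A, π s a = 1)
    (hR : ∀ s a, R s a ∈ Set.Icc (0:ℝ) 1)
    (hν : ∀ s, 0 ≤ ν s) (hν1 : ∑ s : S, ν s = 1) (h : ℕ) :
    (∑ s : S, ∑ a : A, nuPol P π ν h s * π s a * R s a) ∈ Set.Icc (0:ℝ) 1 := by
  constructor
  · exact Finset.sum_nonneg fun s _ => Finset.sum_nonneg fun a _ =>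
      mul_nonneg (mul_nonneg (nuPol_nonneg hP hπ hν h s) (hπ s a)) ((hR s a).1)
  · calc (∑ s : S, ∑ a : A, nuPol P π ν h s * π s a * R s a)
        ≤ ∑ s : S, ∑ a : A, nuPol P π ν h s * π s a := by
          refine Finset.sum_le_sum fun s _ => Finset.sum_le_sum fun a _ => ?_
          have hnn : 0 ≤ nuPol P π ν h s * π s a :=
            mul_nonneg (nuPol_nonneg hP hπ hν h s) (hπ s a)
          calc nuPol P π ν h s * π s a * R s a ≤ nuPol P π ν h s * π s a * 1 :=
                mul_le_mul_of_nonneg_left ((hR s a).2) hnn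
            _ = nuPol P π ν h s * π s a := mul_one _
      _ = ∑ s : S, nuPol P π ν h s := by
          refine Finset.sum_congr rfl fun s _ => ?_
          rw [← Finset.mul_sum, hπ1, mul_one]
      _ = 1 := nuPol_sum_one hP1 hπ1 hν1 h

lemma Vdisc_summable (hγ0 : 0 ≤ γ) (hγ1 : γ < 1)
    (hP : ∀ s a s', 0 ≤ P s a s') (hP1 : ∀ s a, ∑ s' : S, P s a s' = 1)
    (hπ : ∀ s a, 0 ≤ π s a) (hπ1 : ∀ s, ∑ a : A, π s a = 1)
    (hR : ∀ s a, R s a ∈ Set.Icc (0:ℝ) 1)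
    (hν : ∀ s, 0 ≤ ν s) (hν1 : ∑ s : S, ν s = 1) :
    Summable (fun h => γ ^ h * ∑ s : S, ∑ a : A, nuPol P π ν h s * π s a * R s a) :=
  summable_geo_bound hγ0 hγ1 (M := 1) fun h => by
    have := csum_mem hP hP1 hπ hπ1 hR hν hν1 (h := h)
    rw [abs_of_nonneg this.1]; exact this.2

lemma Vdisc_nonneg (hγ0 : 0 ≤ γ)
    (hP : ∀ s a s', 0 ≤ P s a s')
    (hπ : ∀ s a, 0 ≤ π s a)
    (hR : ∀ s a, R s a ∈ Set.Icc (0:ℝ) 1)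
    (hν : ∀ s, 0 ≤ ν s) :
    0 ≤ Vdisc γ P R π ν :=
  tsum_nonneg fun h => mul_nonneg (pow_nonneg hγ0 h)
    (Finset.sum_nonneg fun s _ => Finset.sum_nonneg fun a _ =>
      mul_nonneg (mul_nonneg (nuPol_nonneg hP hπ hν h s) (hπ s a)) ((hR s a).1))

lemma Vdisc_le (hγ0 : 0 ≤ γ) (hγ1 : γ < 1)
    (hP : ∀ s a s', 0 ≤ P s a s') (hP1 : ∀ s a, ∑ s' : S, P s a s' = 1)
    (hπ : ∀ s a, 0 ≤ π s a) (hπ1 : ∀ s, ∑ a : A, π s a = 1)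
    (hR : ∀ s a, R s a ∈ Set.Icc (0:ℝ) 1)
    (hν : ∀ s, 0 ≤ ν s) (hν1 : ∑ s : S, ν s = 1) :
    Vdisc γ P R π ν ≤ (1 - γ)⁻¹ := by
  have hsum := Vdisc_summable hγ0 hγ1 hP hP1 hπ hπ1 hR hν hν1
  calc Vdisc γ P R π ν ≤ ∑' h : ℕ, γ ^ h := by
        refine Summable.tsum_le_tsum (fun h => ?_) hsum (summable_geometric_of_lt_one hγ0 hγ1)
        have := csum_mem hP hP1 hπ hπ1 hR hν hν1 (h := h)
        calc γ ^ h * _ ≤ γ ^ h * 1 := mul_le_mul_of_nonneg_left this.2 (pow_nonneg hγ0 h)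
          _ = γ ^ h := mul_one _
    _ = (1 - γ)⁻¹ := tsum_geometric_of_lt_one hγ0 hγ1

lemma dirac_nonneg [DecidableEq S] (s0 t : S) : (0:ℝ) ≤ if t = s0 then 1 else 0 := by
  split <;> norm_num

lemma dirac_sum_one [DecidableEq S] (s0 : S) :
    ∑ t : S, (if t = s0 then (1:ℝ) else 0) = 1 := by
  simp

lemma Vdisc_linear [DecidableEq S] (hγ0 : 0 ≤ γ) (hγ1 : γ < 1)
    (hP : ∀ s a s', 0 ≤ P s a s') (hP1 : ∀ s a, ∑ s' : S, P s a s' = 1)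
    (hπ : ∀ s a, 0 ≤ π s a) (hπ1 : ∀ s, ∑ a : A, π s a = 1)
    (hR : ∀ s a, R s a ∈ Set.Icc (0:ℝ) 1) (ν : S → ℝ) :
    Vdisc γ P R π ν =
      ∑ s0 : S, ν s0 * Vdisc γ P R π (fun t => if t = s0 then 1 else 0) := by
  have key : ∀ h, (∑ s : S, ∑ a : A, nuPol P π ν h s * π s a * R s a)
      = ∑ s0 : S, ν s0 * ∑ s : S, ∑ a : A,
          nuPol P π (fun t => if t = s0 then 1 else 0) h s * π s a * R s a := by
    intro h
    simp only [Finset.mul_sum]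
    conv_rhs => rw [Finset.sum_comm]
    refine Finset.sum_congr rfl fun s _ => ?_
    conv_rhs => rw [Finset.sum_comm]
    refine Finset.sum_congr rfl fun a _ => ?_
    rw [nuPol_linear h s, Finset.sum_mul, Finset.sum_mul]
    exact Finset.sum_congr rfl fun s0 _ => by ring
  unfold Vdisc
  calc (∑' h : ℕ, γ ^ h * ∑ s : S, ∑ a : A, nuPol P π ν h s * π s a * R s a)
      = ∑' h : ℕ, ∑ s0 : S, ν s0 * (γ ^ h * ∑ s : S, ∑ a : A,
          nuPol P π (fun t => if t = s0 then 1 else 0) h s * π s a * R s a) := by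
        refine tsum_congr fun h => ?_
        rw [key h, Finset.mul_sum]
        exact Finset.sum_congr rfl fun s0 _ => by ring
    _ = ∑ s0 : S, ∑' h : ℕ, ν s0 * (γ ^ h * ∑ s : S, ∑ a : A,
          nuPol P π (fun t => if t = s0 then 1 else 0) h s * π s a * R s a) := by
        refine Summable.tsum_finsetSum fun s0 _ => Summable.mul_left _ ?_
        exact Vdisc_summable hγ0 hγ1 hP hP1 hπ hπ1 hR
          (dirac_nonneg s0) (dirac_sum_one s0)
    _ = ∑ s0 : S, ν s0 * ∑' h : ℕ, γ ^ h * ∑ s : S, ∑ a : A,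
          nuPol P π (fun t => if t = s0 then 1 else 0) h s * π s a * R s a := by
        exact Finset.sum_congr rfl fun s0 _ => (tsum_mul_left)

lemma Vdisc_step (hγ0 : 0 ≤ γ) (hγ1 : γ < 1)
    (hP : ∀ s a s', 0 ≤ P s a s') (hP1 : ∀ s a, ∑ s' : S, P s a s' = 1)
    (hπ : ∀ s a, 0 ≤ π s a) (hπ1 : ∀ s, ∑ a : A, π s a = 1)
    (hR : ∀ s a, R s a ∈ Set.Icc (0:ℝ) 1)
    (hν : ∀ s, 0 ≤ ν s) (hν1 : ∑ s : S, ν s = 1) :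
    Vdisc γ P R π ν = (∑ s : S, ∑ a : A, ν s * π s a * R s a)
      + γ * Vdisc γ P R π (fun t => ∑ s : S, ∑ a : A, ν s * π s a * P s a t) := by
  have hsum := Vdisc_summable hγ0 hγ1 hP hP1 hπ hπ1 hR hν hν1
  unfold Vdisc
  rw [Summable.tsum_eq_zero_add hsum]
  simp only [pow_zero, one_mul]
  congr 1
  calc (∑' h : ℕ, γ ^ (h+1) * ∑ s : S, ∑ a : A, nuPol P π ν (h+1) s * π s a * R s a)
        = ∑' h : ℕ, γ * (γ ^ h * ∑ s : S, ∑ a : A,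
            nuPol P π (fun t => ∑ u : S, ∑ a : A, ν u * π u a * P u a t) h s * π s a * R s a) := by
          refine tsum_congr fun h => ?_
          rw [pow_succ]
          have : ∀ s, nuPol P π ν (h+1) s
              = nuPol P π (fun t => ∑ u : S, ∑ a : A, ν u * π u a * P u a t) h s :=
            fun s => nuPol_shift h s
          simp only [this]
          ring
      _ = γ * ∑' h : ℕ, γ ^ h * ∑ s : S, ∑ a : A,
            nuPol P π (fun t => ∑ u : S, ∑ a : A, ν u * π u a * P u a t) h s * π s a * R s a :=
          tsum_mul_left

end Vfacts

section Main
variable {S A : Type*} [Fintype S] [Fintype A] [DecidableEq S]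
variable {γ : ℝ} {P : S → A → S → ℝ} {R : S → A → ℝ} {π : S → A → ℝ} {ν : S → ℝ}

set_option linter.unusedSectionVars false

lemma Vdisc_dirac (hγ0 : 0 ≤ γ) (hγ1 : γ < 1)
    (hP : ∀ s a s', 0 ≤ P s a s') (hP1 : ∀ s a, ∑ s' : S, P s a s' = 1)
    (hπ : ∀ s a, 0 ≤ π s a) (hπ1 : ∀ s, ∑ a : A, π s a = 1)
    (hR : ∀ s a, R s a ∈ Set.Icc (0:ℝ) 1) (s : S) :
    Vdisc γ P R π (fun t => if t = s then 1 else 0)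
      = ∑ a : A, π s a * Qdisc γ P R π s a := by
  rw [Vdisc_step hγ0 hγ1 hP hP1 hπ hπ1 hR (dirac_nonneg s) (dirac_sum_one s)]
  have hstep : (fun t => ∑ u : S, ∑ a : A,
      (if u = s then (1:ℝ) else 0) * π u a * P u a t)
      = fun t => ∑ a : A, π s a * P s a t := by
    funext t
    rw [Finset.sum_comm]
    simp [ite_mul, mul_ite]
  rw [hstep]
  have hfirst : (∑ u : S, ∑ a : A, (if u = s then (1:ℝ) else 0) * π u a * R u a)
      = ∑ a : A, π s a * R s a := by
    rw [Finset.sum_comm]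
    simp [ite_mul, mul_ite]
  rw [hfirst]
  rw [Vdisc_linear hγ0 hγ1 hP hP1 hπ hπ1 hR]
  simp only [Qdisc, mul_add, Finset.sum_add_distrib]
  congr 1
  simp only [Finset.sum_mul, Finset.mul_sum]
  rw [Finset.sum_comm]
  exact Finset.sum_congr rfl fun a _ => Finset.sum_congr rfl fun s' _ => by ring

lemma Qdisc_mem (hγ0 : 0 ≤ γ) (hγ1 : γ < 1)
    (hP : ∀ s a s', 0 ≤ P s a s') (hP1 : ∀ s a, ∑ s' : S, P s a s' = 1)
    (hπ : ∀ s a, 0 ≤ π s a) (hπ1 : ∀ s, ∑ a : A, π s a = 1)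
    (hR : ∀ s a, R s a ∈ Set.Icc (0:ℝ) 1) (s : S) (a : A) :
    Qdisc γ P R π s a ∈ Set.Icc (0:ℝ) (1 + γ * (1 - γ)⁻¹) := by
  have hV : ∀ s' : S, Vdisc γ P R π (fun t => if t = s' then 1 else 0) ∈
      Set.Icc (0:ℝ) ((1-γ)⁻¹) := fun s' =>
    ⟨Vdisc_nonneg hγ0 hP hπ hR (dirac_nonneg s'),
     Vdisc_le hγ0 hγ1 hP hP1 hπ hπ1 hR (dirac_nonneg s') (dirac_sum_one s')⟩
  constructor
  · exact add_nonneg (hR s a).1 (mul_nonneg hγ0 (Finset.sum_nonneg fun s' _ =>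
      mul_nonneg (hP s a s') (hV s').1))
  · refine add_le_add (hR s a).2 (mul_le_mul_of_nonneg_left ?_ hγ0)
    calc (∑ s' : S, P s a s' * Vdisc γ P R π (fun t => if t = s' then 1 else 0))
        ≤ ∑ s' : S, P s a s' * (1-γ)⁻¹ :=
          Finset.sum_le_sum fun s' _ => mul_le_mul_of_nonneg_left ((hV s').2) (hP s a s')
      _ = (1-γ)⁻¹ := by rw [← Finset.sum_mul, hP1, one_mul]

lemma Adisc_abs_le (hγ0 : 0 ≤ γ) (hγ1 : γ < 1)
    (hP : ∀ s a s', 0 ≤ P s a s') (hP1 : ∀ s a, ∑ s' : S, P s a s' = 1)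
    (hπ : ∀ s a, 0 ≤ π s a) (hπ1 : ∀ s, ∑ a : A, π s a = 1)
    (hR : ∀ s a, R s a ∈ Set.Icc (0:ℝ) 1) (s : S) (a : A) :
    |Adisc γ P R π s a| ≤ 2 * (1 + γ * (1 - γ)⁻¹) := by
  have hQ := fun s a => Qdisc_mem hγ0 hγ1 hP hP1 hπ hπ1 hR s a
  have hQb : ∀ s a, |Qdisc γ P R π s a| ≤ 1 + γ * (1-γ)⁻¹ := fun s a => by
    rw [abs_of_nonneg (hQ s a).1]; exact (hQ s a).2
  calc |Adisc γ P R π s a|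
      ≤ |Qdisc γ P R π s a| + |∑ a' : A, π s a' * Qdisc γ P R π s a'| := abs_sub _ _
    _ ≤ (1 + γ * (1-γ)⁻¹) + (1 + γ * (1-γ)⁻¹) := by
        refine add_le_add (hQb s a) ?_
        calc |∑ a' : A, π s a' * Qdisc γ P R π s a'|
            ≤ ∑ a' : A, |π s a' * Qdisc γ P R π s a'| := Finset.abs_sum_le_sum_abs _ _
          _ ≤ ∑ a' : A, π s a' * (1 + γ * (1-γ)⁻¹) := by
              refine Finset.sum_le_sum fun a' _ => ?_
              rw [abs_mul, abs_of_nonneg (hπ s a')]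
              exact mul_le_mul_of_nonneg_left (hQb s a') (hπ s a')
          _ = 1 + γ * (1-γ)⁻¹ := by rw [← Finset.sum_mul, hπ1, one_mul]
    _ = 2 * (1 + γ * (1 - γ)⁻¹) := by ring

end Main

section Main2
set_option linter.unusedSectionVars false
variable {S A : Type*} [Fintype S] [Fintype A] [DecidableEq S]
variable {γ : ℝ} {P : S → A → S → ℝ} {R : S → A → ℝ} {π : S → A → ℝ} {ν : S → ℝ}

lemma dDisc_nonneg (hγ1 : γ ≤ 1) (hγ0 : 0 ≤ γ)
    (hP : ∀ s a s', 0 ≤ P s a s') (hπ : ∀ s a, 0 ≤ π s a) (hν : ∀ s, 0 ≤ ν s) (s : S) :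
    0 ≤ dDisc γ P π ν s :=
  mul_nonneg (by linarith) (tsum_nonneg fun h =>
    mul_nonneg (pow_nonneg hγ0 h) (nuPol_nonneg hP hπ hν h s))

lemma nu_summable (hγ0 : 0 ≤ γ) (hγ1 : γ < 1)
    (hP : ∀ s a s', 0 ≤ P s a s') (hP1 : ∀ s a, ∑ s' : S, P s a s' = 1)
    (hπ : ∀ s a, 0 ≤ π s a) (hπ1 : ∀ s, ∑ a : A, π s a = 1)
    (hν : ∀ s, 0 ≤ ν s) (hν1 : ∑ s : S, ν s = 1) (s : S) :
    Summable (fun h => γ ^ h * nuPol P π ν h s) :=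
  summable_geo_bound hγ0 hγ1 (M := 1) fun h => by
    rw [abs_of_nonneg (nuPol_nonneg hP hπ hν h s)]
    exact nuPol_le_one hP hP1 hπ hπ1 hν hν1 h s

lemma dDisc_sum_one (hγ0 : 0 ≤ γ) (hγ1 : γ < 1)
    (hP : ∀ s a s', 0 ≤ P s a s') (hP1 : ∀ s a, ∑ s' : S, P s a s' = 1)
    (hπ : ∀ s a, 0 ≤ π s a) (hπ1 : ∀ s, ∑ a : A, π s a = 1)
    (hν : ∀ s, 0 ≤ ν s) (hν1 : ∑ s : S, ν s = 1) :
    ∑ s : S, dDisc γ P π ν s = 1 := by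
  unfold dDisc
  rw [← Finset.mul_sum]
  rw [← Summable.tsum_finsetSum (fun s _ => nu_summable hγ0 hγ1 hP hP1 hπ hπ1 hν hν1 s)]
  have : ∀ h : ℕ, (∑ s : S, γ ^ h * nuPol P π ν h s) = γ ^ h := by
    intro h
    rw [← Finset.mul_sum, nuPol_sum_one hP1 hπ1 hν1 h, mul_one]
  rw [tsum_congr this, tsum_geometric_of_lt_one hγ0 hγ1]
  exact mul_inv_cancel₀ (by linarith)

lemma dDisc_ge (hγ0 : 0 ≤ γ) (hγ1 : γ < 1)
    (hP : ∀ s a s', 0 ≤ P s a s') (hP1 : ∀ s a, ∑ s' : S, P s a s' = 1)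
    (hπ : ∀ s a, 0 ≤ π s a) (hπ1 : ∀ s, ∑ a : A, π s a = 1)
    (hν : ∀ s, 0 ≤ ν s) (hν1 : ∑ s : S, ν s = 1) (s : S) :
    (1 - γ) * ν s ≤ dDisc γ P π ν s := by
  unfold dDisc
  refine mul_le_mul_of_nonneg_left ?_ (by linarith)
  have h0 : γ ^ 0 * nuPol P π ν 0 s = ν s := by simp [nuPol]
  rw [← h0]
  exact Summable.le_tsum (nu_summable hγ0 hγ1 hP hP1 hπ hπ1 hν hν1 s) 0 fun i _ =>
    mul_nonneg (pow_nonneg hγ0 i) (nuPol_nonneg hP hπ hν i s)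

/-- The performance difference lemma. -/
lemma pdl (hγ0 : 0 ≤ γ) (hγ1 : γ < 1)
    (hP : ∀ s a s', 0 ≤ P s a s') (hP1 : ∀ s a, ∑ s' : S, P s a s' = 1)
    (hπ : ∀ s a, 0 ≤ π s a) (hπ1 : ∀ s, ∑ a : A, π s a = 1)
    {πb : S → A → ℝ} (hπb : ∀ s a, 0 ≤ πb s a) (hπb1 : ∀ s, ∑ a : A, πb s a = 1)
    (hR : ∀ s a, R s a ∈ Set.Icc (0:ℝ) 1)
    (hν : ∀ s, 0 ≤ ν s) (hν1 : ∑ s : S, ν s = 1) :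
    ∑ s : S, dDisc γ P π ν s * ∑ a : A, π s a * Adisc γ P R πb s a
      = (1 - γ) * (Vdisc γ P R π ν - Vdisc γ P R πb ν) := by
  set Vb : S → ℝ := fun s' => Vdisc γ P R πb (fun t => if t = s' then 1 else 0) with hVbdef
  set g : S → ℝ := fun s => ∑ a : A, π s a * Adisc γ P R πb s a with hgdef
  set c : ℕ → ℝ := fun h => ∑ s : S, ∑ a : A, nuPol P π ν h s * π s a * R s a with hcdef
  set w : ℕ → ℝ := fun h => ∑ s : S, nuPol P π ν h s * Vb s with hwdef
  have hVb_mem : ∀ s', Vb s' ∈ Set.Icc (0:ℝ) ((1-γ)⁻¹) := fun s' =>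
    ⟨Vdisc_nonneg hγ0 hP hπb hR (dirac_nonneg s'),
     Vdisc_le hγ0 hγ1 hP hP1 hπb hπb1 hR (dirac_nonneg s') (dirac_sum_one s')⟩
  have hBell : ∀ s, Vb s = ∑ a : A, πb s a * Qdisc γ P R πb s a := fun s =>
    Vdisc_dirac hγ0 hγ1 hP hP1 hπb hπb1 hR s
  have hg_bound : ∀ s, |g s| ≤ 2 * (1 + γ * (1-γ)⁻¹) := by
    intro s
    calc |g s| ≤ ∑ a : A, |π s a * Adisc γ P R πb s a| := Finset.abs_sum_le_sum_abs _ _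
      _ ≤ ∑ a : A, π s a * (2 * (1 + γ * (1-γ)⁻¹)) := by
          refine Finset.sum_le_sum fun a _ => ?_
          rw [abs_mul, abs_of_nonneg (hπ s a)]
          exact mul_le_mul_of_nonneg_left
            (Adisc_abs_le hγ0 hγ1 hP hP1 hπb hπb1 hR s a) (hπ s a)
      _ = 2 * (1 + γ * (1-γ)⁻¹) := by rw [← Finset.sum_mul, hπ1, one_mul]
  -- pointwise decomposition
  have hstepB : ∀ h : ℕ,
      (∑ s : S, nuPol P π ν h s * g s) = c h + γ * w (h+1) - w h := by
    intro h
    have hg : ∀ s, g s = (∑ a : A, π s a * R s a)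
        + γ * ∑ s' : S, (∑ a : A, π s a * P s a s') * Vb s' - Vb s := by
      intro s
      have h1 : g s = (∑ a : A, π s a * Qdisc γ P R πb s a) - Vb s := by
        rw [hgdef]
        simp only [Adisc, mul_sub, Finset.sum_sub_distrib]
        congr 1
        rw [← Finset.sum_mul, hπ1, one_mul, hBell s]
      rw [h1]
      congr 1
      simp only [Qdisc, mul_add, Finset.sum_add_distrib]
      congr 1
      simp only [Finset.sum_mul, Finset.mul_sum]
      rw [Finset.sum_comm]
      exact Finset.sum_congr rfl fun a _ => Finset.sum_congr rfl fun s' _ => by ring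
    calc (∑ s : S, nuPol P π ν h s * g s)
        = ∑ s : S, (nuPol P π ν h s * ∑ a : A, π s a * R s a
            + γ * (nuPol P π ν h s * ∑ s' : S, (∑ a : A, π s a * P s a s') * Vb s')
            - nuPol P π ν h s * Vb s) := by
          refine Finset.sum_congr rfl fun s _ => ?_
          rw [hg s]; ring
      _ = c h + γ * w (h+1) - w h := by
          have hch : (∑ s : S, nuPol P π ν h s * ∑ a : A, π s a * R s a) = c h := by
            rw [hcdef]
            simp only [Finset.mul_sum]
            exact Finset.sum_congr rfl fun s _ => Finset.sum_congr rfl fun a _ => by ring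
          have hwh : (∑ s : S, nuPol P π ν h s *
              ∑ s' : S, (∑ a : A, π s a * P s a s') * Vb s') = w (h+1) := by
            rw [hwdef]
            show _ = ∑ s' : S, nuPol P π ν (h+1) s' * Vb s'
            have hdef : ∀ s' : S, nuPol P π ν (h+1) s'
                = ∑ s : S, ∑ a : A, nuPol P π ν h s * π s a * P s a s' := fun s' => rfl
            simp only [hdef, Finset.sum_mul, Finset.mul_sum]
            rw [Finset.sum_comm]
            exact Finset.sum_congr rfl fun s _ => Finset.sum_congr rfl fun s' _ =>
              Finset.sum_congr rfl fun a _ => by ring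
          rw [Finset.sum_sub_distrib, Finset.sum_add_distrib, hch, ← Finset.mul_sum, hwh]
  -- summability
  have hMq : (0:ℝ) ≤ (1-γ)⁻¹ := inv_nonneg.mpr (by linarith)
  have hsc : Summable (fun h => γ ^ h * c h) :=
    Vdisc_summable hγ0 hγ1 hP hP1 hπ hπ1 hR hν hν1
  have hw_bound : ∀ h, |w h| ≤ (1-γ)⁻¹ := by
    intro h
    calc |w h| ≤ ∑ s : S, |nuPol P π ν h s * Vb s| := Finset.abs_sum_le_sum_abs _ _
      _ ≤ ∑ s : S, nuPol P π ν h s * (1-γ)⁻¹ := by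
          refine Finset.sum_le_sum fun s _ => ?_
          rw [abs_mul, abs_of_nonneg (nuPol_nonneg hP hπ hν h s),
            abs_of_nonneg (hVb_mem s).1]
          exact mul_le_mul_of_nonneg_left ((hVb_mem s).2) (nuPol_nonneg hP hπ hν h s)
      _ = (1-γ)⁻¹ := by rw [← Finset.sum_mul, nuPol_sum_one hP1 hπ1 hν1 h, one_mul]
  have hsw : Summable (fun h => γ ^ h * w h) := summable_geo_bound hγ0 hγ1 hw_bound
  have hsw2 : Summable (fun h => γ * (γ ^ h * w (h+1))) :=
    (summable_geo_bound hγ0 hγ1 (fun h => hw_bound (h+1))).mul_left γ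
  -- shift identity
  have hshift : (∑' h : ℕ, γ * (γ ^ h * w (h+1))) = (∑' h : ℕ, γ ^ h * w h) - w 0 := by
    have h0 := Summable.tsum_eq_zero_add hsw
    simp only [pow_zero, one_mul] at h0
    have h1 : ∀ h : ℕ, γ ^ (h+1) * w (h+1) = γ * (γ ^ h * w (h+1)) := fun h => by
      rw [pow_succ]; ring
    rw [tsum_congr h1] at h0
    linarith
  have hw0 : w 0 = Vdisc γ P R πb ν := by
    rw [hwdef]
    show (∑ s : S, ν s * Vb s) = _
    rw [Vdisc_linear hγ0 hγ1 hP hP1 hπb hπb1 hR ν]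
  -- step A: exchange the finite sum and tsum
  have hA : (∑ s : S, dDisc γ P π ν s * g s)
      = (1 - γ) * ∑' h : ℕ, γ ^ h * ∑ s : S, nuPol P π ν h s * g s := by
    unfold dDisc
    calc (∑ s : S, ((1 - γ) * ∑' h : ℕ, γ ^ h * nuPol P π ν h s) * g s)
        = ∑ s : S, (1 - γ) * ∑' h : ℕ, γ ^ h * (nuPol P π ν h s * g s) := by
          refine Finset.sum_congr rfl fun s _ => ?_
          rw [mul_assoc, ← tsum_mul_right]
          congr 1
          exact tsum_congr fun h => by ring
      _ = (1 - γ) * ∑ s : S, ∑' h : ℕ, γ ^ h * (nuPol P π ν h s * g s) := by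
          rw [Finset.mul_sum]
      _ = (1 - γ) * ∑' h : ℕ, ∑ s : S, γ ^ h * (nuPol P π ν h s * g s) := by
          congr 1
          refine (Summable.tsum_finsetSum fun s _ => ?_).symm
          refine summable_geo_bound hγ0 hγ1 (M := 2 * (1 + γ * (1-γ)⁻¹)) fun h => ?_
          rw [abs_mul, abs_of_nonneg (nuPol_nonneg hP hπ hν h s)]
          calc nuPol P π ν h s * |g s| ≤ 1 * (2 * (1 + γ * (1-γ)⁻¹)) := by
                refine mul_le_mul (nuPol_le_one hP hP1 hπ hπ1 hν hν1 h s) (hg_bound s)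
                  (abs_nonneg _) zero_le_one
            _ = 2 * (1 + γ * (1-γ)⁻¹) := one_mul _
      _ = (1 - γ) * ∑' h : ℕ, γ ^ h * ∑ s : S, nuPol P π ν h s * g s := by
          congr 1
          exact tsum_congr fun h => by rw [Finset.mul_sum]
  rw [hA]
  congr 1
  calc (∑' h : ℕ, γ ^ h * ∑ s : S, nuPol P π ν h s * g s)
      = ∑' h : ℕ, (γ ^ h * c h + γ * (γ ^ h * w (h+1)) - γ ^ h * w h) := by
        refine tsum_congr fun h => ?_
        rw [hstepB h]; ring
    _ = (∑' h : ℕ, γ ^ h * c h) + (∑' h : ℕ, γ * (γ ^ h * w (h+1)))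
        - ∑' h : ℕ, γ ^ h * w h := by
        rw [Summable.tsum_sub (hsc.add hsw2) hsw, Summable.tsum_add hsc hsw2]
    _ = Vdisc γ P R π ν - Vdisc γ P R πb ν := by
        rw [hshift, hw0]
        have : (∑' h : ℕ, γ ^ h * c h) = Vdisc γ P R π ν := rfl
        rw [this]; ring

end Main2

section MaxA
variable {S A : Type*} [Fintype S] [Fintype A] [Nonempty A] [DecidableEq S]

lemma wsum_le_maxA (g w : A → ℝ) (hw : ∀ a, 0 ≤ w a) (hw1 : ∑ a : A, w a = 1) :
    ∑ a : A, w a * g a ≤ maxA g := by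
  calc ∑ a : A, w a * g a ≤ ∑ a : A, w a * maxA g :=
        Finset.sum_le_sum fun a _ => mul_le_mul_of_nonneg_left
          (Finset.le_sup' g (Finset.mem_univ a)) (hw a)
    _ = maxA g := by rw [← Finset.sum_mul, hw1, one_mul]

lemma maxA_adisc_nonneg {γ : ℝ} {P : S → A → S → ℝ} {R : S → A → ℝ}
    {πb : S → A → ℝ} (hπb : ∀ s a, 0 ≤ πb s a) (hπb1 : ∀ s, ∑ a : A, πb s a = 1)
    (s : S) : 0 ≤ maxA (fun a => Adisc γ P R πb s a) := by
  have hz : (∑ a : A, πb s a * Adisc γ P R πb s a) = 0 := by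
    simp only [Adisc, mul_sub, Finset.sum_sub_distrib]
    rw [← Finset.sum_mul, hπb1, one_mul, sub_self]
  have := wsum_le_maxA (fun a => Adisc γ P R πb s a) (πb s) (hπb s) (hπb1 s)
  rw [hz] at this
  exact this

end MaxA


/-- Guarantee of conservative policy iteration with a trace model (CPI-trace).
With `ν = d^{πf}_{P0}` and `ρ = d^{πb}_ν`: local optimality of `πb` over the class `Π` on `ρ`,
realizability of the greedy improvement in `Π`, distribution matching of `ν` to the offline
distribution `μ`, and coverage of the comparator by `μ` together give
`V^{πcomp}(P0) − V^{πb}(P0) ≤ 2εC/(1−γ)² + Cη/(1−γ)`. -/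
theorem cpi_trace_guarantee
    {S A : Type*} [Fintype S] [Fintype A] [Nonempty S] [Nonempty A] [DecidableEq S]
    (γ : ℝ) (hγ0 : 0 ≤ γ) (hγ1 : γ < 1)
    (P : S → A → S → ℝ) (hP0 : ∀ s a s', 0 ≤ P s a s') (hP1 : ∀ s a, ∑ s' : S, P s a s' = 1)
    (R : S → A → ℝ) (hR : ∀ s a, R s a ∈ Set.Icc (0 : ℝ) 1)
    (P0 : S → ℝ) (hP00 : ∀ s, 0 ≤ P0 s) (hP01 : ∑ s : S, P0 s = 1)
    -- stationary policies
    (πf πb πcomp : S → A → ℝ)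
    (hπf0 : ∀ s a, 0 ≤ πf s a) (hπf1 : ∀ s, ∑ a : A, πf s a = 1)
    (hπb0 : ∀ s a, 0 ≤ πb s a) (hπb1 : ∀ s, ∑ a : A, πb s a = 1)
    (hπc0 : ∀ s a, 0 ≤ πcomp s a) (hπc1 : ∀ s, ∑ a : A, πcomp s a = 1)
    -- policy class
    (Pcls : Set (S → A → ℝ)) (hPcls : Pcls.Nonempty)
    (hPclsStoch : ∀ p ∈ Pcls, (∀ s a, 0 ≤ p s a) ∧ ∀ s, ∑ a : A, p s a = 1)
    -- offline distribution
    (μ : S → ℝ) (hμ0 : ∀ s, 0 ≤ μ s) (hμ1 : ∑ s : S, μ s = 1)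
    (ε η C : ℝ) (hε : 0 ≤ ε) (hη : 0 ≤ η) (hC : 0 ≤ C)
    -- (i) local optimality on ρ = d^{πb}_{ν}, where ν = d^{πf}_{P0}
    (hlocal : ∀ p ∈ Pcls,
      ∑ s : S, dDisc γ P πb (dDisc γ P πf P0) s * ∑ a : A, p s a * Adisc γ P R πb s a ≤ 2 * ε)
    -- (ii) realizability
    (hreal : ∃ p ∈ Pcls,
      ∑ s : S, dDisc γ P πb (dDisc γ P πf P0) s * maxA (fun a => Adisc γ P R πb s a) =
        ∑ s : S, dDisc γ P πb (dDisc γ P πf P0) s * ∑ a : A, p s a * Adisc γ P R πb s a)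
    -- (iii) distribution matching
    (hmatch : ∑ s : S, (μ s - dDisc γ P πf P0 s) * maxA (fun a => Adisc γ P R πb s a) ≤ η)
    -- (iv) coverage
    (hcov : ∀ s, dDisc γ P πcomp P0 s ≤ C * μ s) :
    Vdisc γ P R πcomp P0 - Vdisc γ P R πb P0 ≤
      2 * ε * C / (1 - γ) ^ 2 + C * η / (1 - γ) := by
  have h1γ : (0:ℝ) < 1 - γ := by linarith
  set ν : S → ℝ := dDisc γ P πf P0 with hνdef
  set M : S → ℝ := fun s => maxA (fun a => Adisc γ P R πb s a) with hMdef
  have hν0 : ∀ s, 0 ≤ ν s := fun s => dDisc_nonneg (le_of_lt hγ1) hγ0 hP0 hπf0 hP00 s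
  have hν1 : ∑ s : S, ν s = 1 := dDisc_sum_one hγ0 hγ1 hP0 hP1 hπf0 hπf1 hP00 hP01
  have hM0 : ∀ s, 0 ≤ M s := fun s => maxA_adisc_nonneg hπb0 hπb1 s
  -- bound on ∑ ρ M
  have hρM : ∑ s : S, dDisc γ P πb ν s * M s ≤ 2 * ε := by
    obtain ⟨p, hpmem, hpeq⟩ := hreal
    rw [hMdef]
    calc ∑ s : S, dDisc γ P πb ν s * maxA (fun a => Adisc γ P R πb s a)
        = ∑ s : S, dDisc γ P πb ν s * ∑ a : A, p s a * Adisc γ P R πb s a := hpeq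
      _ ≤ 2 * ε := hlocal p hpmem
  -- ∑ ν M ≤ 2ε/(1-γ)
  have hνM : ∑ s : S, ν s * M s ≤ 2 * ε / (1 - γ) := by
    rw [le_div_iff₀ h1γ]
    calc (∑ s : S, ν s * M s) * (1 - γ) = ∑ s : S, ((1 - γ) * ν s) * M s := by
          rw [Finset.sum_mul]; exact Finset.sum_congr rfl fun s _ => by ring
      _ ≤ ∑ s : S, dDisc γ P πb ν s * M s :=
          Finset.sum_le_sum fun s _ => mul_le_mul_of_nonneg_right
            (dDisc_ge hγ0 hγ1 hP0 hP1 hπb0 hπb1 hν0 hν1 s) (hM0 s)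
      _ ≤ 2 * ε := hρM
  -- ∑ μ M ≤ η + 2ε/(1-γ)
  have hμM : ∑ s : S, μ s * M s ≤ η + 2 * ε / (1 - γ) := by
    have hsub : ∑ s : S, μ s * M s - ∑ s : S, ν s * M s ≤ η := by
      rw [← Finset.sum_sub_distrib]
      calc (∑ s : S, (μ s * M s - ν s * M s)) = ∑ s : S, (μ s - ν s) * M s :=
            Finset.sum_congr rfl fun s _ => by ring
        _ ≤ η := hmatch
    linarith
  -- PDL for the comparator
  have hPDL := pdl (πb := πb) hγ0 hγ1 hP0 hP1 hπc0 hπc1 hπb0 hπb1 hR hP00 hP01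
  have hX : ∑ s : S, dDisc γ P πcomp P0 s * ∑ a : A, πcomp s a * Adisc γ P R πb s a
      ≤ C * (η + 2 * ε / (1 - γ)) := by
    calc ∑ s : S, dDisc γ P πcomp P0 s * ∑ a : A, πcomp s a * Adisc γ P R πb s a
        ≤ ∑ s : S, dDisc γ P πcomp P0 s * M s := by
          refine Finset.sum_le_sum fun s _ => mul_le_mul_of_nonneg_left ?_
            (dDisc_nonneg (le_of_lt hγ1) hγ0 hP0 hπc0 hP00 s)
          exact wsum_le_maxA _ (πcomp s) (hπc0 s) (hπc1 s)
      _ ≤ ∑ s : S, (C * μ s) * M s :=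
          Finset.sum_le_sum fun s _ => mul_le_mul_of_nonneg_right (hcov s) (hM0 s)
      _ = C * ∑ s : S, μ s * M s := by
          rw [Finset.mul_sum]; exact Finset.sum_congr rfl fun s _ => by ring
      _ ≤ C * (η + 2 * ε / (1 - γ)) := mul_le_mul_of_nonneg_left hμM hC
  have hD : Vdisc γ P R πcomp P0 - Vdisc γ P R πb P0
      = (∑ s : S, dDisc γ P πcomp P0 s * ∑ a : A, πcomp s a * Adisc γ P R πb s a)
        / (1 - γ) := by
    rw [hPDL]
    field_simp
  rw [hD]
  rw [div_le_iff₀ h1γ]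
  have hgoal : (2 * ε * C / (1 - γ) ^ 2 + C * η / (1 - γ)) * (1 - γ)
      = C * (η + 2 * ε / (1 - γ)) := by
    field_simp
    ring
  rw [hgoal]
  exact hX
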